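/- Let ω be an n-bit key with fixed point f of its self-inverting permutation P_s. Then P_s(i) = n+i for every 1 ≤ i ≤ f−n−1, and P_s(n+i) = i for every 1 ≤ i ≤ f−n−1. -/

import Mathlib

/-- Binary representation of `ω`, most significant bit first. -/
def binRep (ω : ℕ) : List Bool := (Nat.bits ω).reverse

/-- The extended binary `B*`: `n` ones, then the one's complement of `B`, then a zero. -/
def extBin (ω : ℕ) : List Bool :=
  List.replicate (binRep ω).length true ++ (binRep ω).map (!·) ++ [false]

/-- Ascending list of 1-indexed positions of bit `b` in the bit string `l`. -/
def posOf (l : List Bool) (b : Bool) : List ℕ :=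
  ((List.range l.length).filter (fun i => l.getD i false == b)).map (· + 1)

/-- `Z₀`: ascending positions of zeros in `B*`. -/
def Z0 (ω : ℕ) : List ℕ := posOf (extBin ω) false

/-- `Z₁`: ascending positions of ones in `B*`. -/
def Z1 (ω : ℕ) : List ℕ := posOf (extBin ω) true

/-- Bitonic permutation `P_b = Z₀ ++ reverse Z₁`. -/
def Pb (ω : ℕ) : List ℕ := Z0 ω ++ (Z1 ω).reverse

/-- The self-inverting permutation `P_s`: it pairs the elements of `P_b`
equidistant from its extremes, i.e. `P_s (b_{2n+2-i}) = b_i`. -/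
def Ps (ω : ℕ) (x : ℕ) : ℕ :=
  (Pb ω).getD ((Pb ω).length - 1 - (Pb ω).idxOf x) 0

/-!
Write `B = 1^t 0 …` (or `B = 1^n`, `t = n`). Then `B* = 1^n 0^t 1 …` (resp. `1^n 0^(n+1)`), so
`Z₀` starts with `n+1, …, n+t`, `Z₁` starts with `1, …, n, n+t+1` (resp. `Z₀` ends with
`2n+1 = n+t+1` and `Z₁ = 1, …, n`). Hence `P_b = (n+1, …, n+t, …, n+t+1, n, …, 1)` has length
`2n+1` with `f = n+t+1` in the middle, so `i ≤ f-n-1` means `i ≤ t`, and `P_s`, which swaps the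
entries of `P_b` at mirror positions, pairs `n+i` with `i`.
-/

open List

theorem map_add_right_range' (k s m : ℕ) : (range' s m).map (· + k) = range' (s + k) m := by
  simpa [Nat.add_comm] using map_add_range' (a := k) s m 1

theorem posOf_append (l₁ l₂ : List Bool) (b : Bool) :
    posOf (l₁ ++ l₂) b = posOf l₁ b ++ (posOf l₂ b).map (· + l₁.length) := by
  simp only [posOf, length_append, range_add, filter_append, map_append, filter_map, map_map]
  congr 1
  · congr 1
    exact filter_congr fun i hi => by rw [getD_append _ _ _ _ (mem_range.1 hi)]
  · congr 1
    · funext i; simp only [Function.comp]; omega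
    · congr 1
      funext i
      simp [Function.comp, getElem?_append_right]

theorem posOf_replicate_self (n : ℕ) (b : Bool) : posOf (replicate n b) b = range' 1 n := by
  rw [posOf, length_replicate, filter_eq_self.2, range_eq_range']
  · exact map_add_right_range' 1 0 n
  · simp +contextual [getD_eq_getElem?_getD]

theorem posOf_replicate_of_ne (n : ℕ) {b c : Bool} (h : b ≠ c) :
    posOf (replicate n b) c = [] := by
  simp +contextual [posOf, getD_eq_getElem?_getD, h]

theorem posOf_cons (b : Bool) (l : List Bool) (c : Bool) :
    posOf (b :: l) c = (if b = c then [1] else []) ++ (posOf l c).map (· + 1) := by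
  rw [← singleton_append, posOf_append]
  cases b <;> cases c <;> rfl

-- `Pb ω` is `bitonic (extBin ω)` by definition.
def bitonic (l : List Bool) : List ℕ := posOf l false ++ (posOf l true).reverse

theorem length_bitonic (l : List Bool) : (bitonic l).length = l.length := by
  induction l with
  | nil => rfl
  | cons b l ih =>
    simp only [bitonic, length_append, length_reverse] at ih ⊢
    cases b <;>
      simp only [posOf_cons, ↓reduceIte, Bool.false_eq_true, Bool.true_eq_false, cons_append,
        nil_append, length_cons, length_map] <;> omega

theorem nodup_posOf (l : List Bool) (b : Bool) : (posOf l b).Nodup :=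
  (nodup_range.filter _).map fun _ _ => Nat.succ.inj

theorem getD_of_mem_posOf {l : List Bool} {b : Bool} {x : ℕ} (hx : x ∈ posOf l b) :
    l.getD (x - 1) false = b := by
  obtain ⟨i, hi, rfl⟩ := mem_map.1 hx
  simpa using (mem_filter.1 hi).2

theorem nodup_bitonic (l : List Bool) : (bitonic l).Nodup :=
  (nodup_posOf l false).append (nodup_reverse.2 (nodup_posOf l true)) fun _ h₀ h₁ =>
    Bool.false_ne_true <|
      (getD_of_mem_posOf h₀).symm.trans (getD_of_mem_posOf (mem_reverse.1 h₁))

theorem bitonic_true_cons (l : List Bool) :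
    bitonic (true :: l) = (bitonic l).map (· + 1) ++ [1] := by
  simp [bitonic, posOf_cons]

theorem bitonic_replicate_append (n t : ℕ) (l : List Bool) :
    bitonic (replicate n true ++ replicate t false ++ l) =
      range' (n + 1) t ++ (bitonic l).map (· + (n + t)) ++ (range' 1 n).reverse := by
  simp [bitonic, posOf_append, posOf_replicate_self, posOf_replicate_of_ne, map_add_right_range',
    Nat.add_comm t n, Nat.add_comm 1 n]

theorem exists_eq_replicate_true_append (B : List Bool) :
    ∃ t, B = replicate t true ∨ ∃ C, B = replicate t true ++ false :: C := by
  induction B with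
  | nil => exact ⟨0, .inl rfl⟩
  | cons b B ih =>
    cases b
    · exact ⟨0, .inr ⟨B, rfl⟩⟩
    · obtain ⟨t, h | ⟨C, h⟩⟩ := ih
      · exact ⟨t + 1, .inl (by rw [h]; rfl)⟩
      · exact ⟨t + 1, .inr ⟨C, by rw [h]; rfl⟩⟩

-- `t` is the number of leading ones of `B`, so `B.length + t + 1` is the fixed point `f`.
theorem exists_bitonic_extension_eq (B : List Bool) : ∃ t ≤ B.length, ∃ M : List ℕ,
    M.length = B.length - t ∧
    bitonic (replicate B.length true ++ B.map (!·) ++ [false]) =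
      range' (B.length + 1) t ++ M ++ (B.length + t + 1) :: (range' 1 B.length).reverse := by
  obtain ⟨t, rfl | ⟨C, rfl⟩⟩ := exists_eq_replicate_true_append B
  · refine ⟨t, by simp, [], by simp, ?_⟩
    rw [map_replicate, length_replicate, Bool.not_true, bitonic_replicate_append]
    simp [show bitonic [false] = [1] from rfl, Nat.add_comm 1]
  · set n := (replicate t true ++ false :: C).length with hn
    have hn' : n = t + C.length + 1 := by simp [hn]; omega
    refine ⟨t, by omega, ((bitonic (C.map (!·) ++ [false])).map (· + 1)).map (· + (n + t)),
      by simp [length_bitonic]; omega, ?_⟩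
    have : replicate n true ++ (replicate t true ++ false :: C).map (!·) ++ [false] =
        replicate n true ++ replicate t false ++ true :: (C.map (!·) ++ [false]) := by simp
    rw [this, bitonic_replicate_append, bitonic_true_cons]
    simp only [map_append, map_map, comp_add_right, map_cons, map_nil, append_assoc, cons_append,
      nil_append, append_cancel_left_eq, cons.injEq, and_true]
    omega

theorem getD_length_sub_one_sub_idxOf {α : Type*} [BEq α] [LawfulBEq α] {l : List α}
    (hl : l.Nodup) {k : ℕ} {x y d : α} (hx : l[k]? = some x)
    (hy : l[l.length - 1 - k]? = some y) : l.getD (l.length - 1 - l.idxOf x) d = y := by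
  obtain ⟨hk, rfl⟩ := List.getElem?_eq_some_iff.1 hx
  rw [hl.idxOf_getElem, getD_eq_getElem?_getD, hy, Option.getD_some]

theorem Ps_eq_of_getElem? {ω k x y : ℕ} (hx : (Pb ω)[k]? = some x)
    (hy : (Pb ω)[(Pb ω).length - 1 - k]? = some y) : Ps ω x = y :=
  getD_length_sub_one_sub_idxOf (nodup_bitonic _) hx hy

theorem stmt12_general (ω n : ℕ) (hn : (binRep ω).length = n) :
    ∀ i, 1 ≤ i → i + n + 1 ≤ (Pb ω).getD n 0 →
      Ps ω i = n + i ∧ Ps ω (n + i) = i := by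
  obtain ⟨t, ht, M, hM, hP⟩ := exists_bitonic_extension_eq (binRep ω)
  replace hP : Pb ω = range' (n + 1) t ++ M ++ (n + t + 1) :: (range' 1 n).reverse := hn ▸ hP
  rw [hn] at ht hM
  intro i hi hfix
  have hlen : (Pb ω).length = 2 * n + 1 := by simp [hP, hM]; omega
  have hprefix : (range' (n + 1) t ++ M).length = n := by simp [hM]; omega
  have hit : i ≤ t := by
    have : (Pb ω).getD n 0 = n + t + 1 := by
      rw [hP, getD_eq_getElem?_getD, getElem?_append_right hprefix.le, hprefix, Nat.sub_self,
        getElem?_cons_zero, Option.getD_some]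
    omega
  have hlow : (Pb ω)[i - 1]? = some (n + i) := by
    rw [hP, append_assoc, getElem?_append_left (by simp; omega), getElem?_range' (by omega)]
    congr 1
    omega
  have hhigh : (Pb ω)[2 * n + 1 - i]? = some i := by
    rw [hP, getElem?_append_right (by omega), hprefix, show 2 * n + 1 - i - n = n - i + 1 by omega,
      getElem?_cons_succ, getElem?_reverse (by simp; omega), getElem?_range' (by simp; omega),
      length_range']
    congr 1
    omega
  constructor
  · exact Ps_eq_of_getElem? hhigh
      (by rwa [hlen, show 2 * n + 1 - 1 - (2 * n + 1 - i) = i - 1 by omega])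
  · exact Ps_eq_of_getElem? hlow
      (by rwa [hlen, show 2 * n + 1 - 1 - (i - 1) = 2 * n + 1 - i by omega])

/-- With `f` the fixed point of `P_s`: `P_s i = n + i` and `P_s (n+i) = i`
for every `1 ≤ i ≤ f - n - 1`. -/
theorem stmt12 (ω n : ℕ) (hω : 0 < ω) (hn : (binRep ω).length = n) :
    ∀ i, 1 ≤ i → i + n + 1 ≤ (Pb ω).getD n 0 →
      Ps ω i = n + i ∧ Ps ω (n + i) = i :=
  stmt12_general ω n hn
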